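/- arXiv:2304.14326 — 2 statements merged into one kernel-verified Lean document; each statement's English description precedes it below -/
import Mathlib

section
/- Fix d, T ∈ ℕ with T ≥ 1, reals L > 0 and C > 0, and for each t ∈ {1,…,T+1} a nonempty closed convex set K_t ⊆ { q ∈ ℝ^d : 0 ≤ q_j ≤ 1 for all j, and Σ_j q_j ≤ L }. Let ℓ_1,…,ℓ_T ∈ ℝ^d satisfy ℓ̄_t := max_{τ ≤ t} ‖ℓ_τ‖_∞ > 0 for all t, let q̂_1 ∈ K_1, and define q̂_{t+1} = Π_{K_{t+1}}(q̂_t − η_t ℓ_t) with η_t = 1/(ℓ̄_t C √T). Then for every q ∈ ⋂_t K_t and every interval 1 ≤ t₁ ≤ t₂ ≤ T: Σ_{t=t₁}^{t₂} ℓ_tᵀ(q̂_t − q) ≤ L·ℓ̄_{t₂}·C·√T + (d/2)·ℓ̄_{t₁,t₂}·(t₂−t₁+1)/(C√T), where ℓ̄_{t₁,t₂} := max_{t₁ ≤ t ≤ t₂} ‖ℓ_t‖_∞. -/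
/-!
Write `D_t = ‖q̂_t - q‖²` and `α_t = ℓ̄_t C √T = 1 / η_t`. Since `q ∈ K_{t+1}` and `K_{t+1}` is
convex, projecting `q̂_t - η_t ℓ_t` onto it does not increase the distance to `q`; expanding the
square gives `ℓ_tᵀ(q̂_t - q) ≤ α_t (D_t - D_{t+1}) / 2 + ‖ℓ_t‖₂² / (2 α_t)`.
Because `‖ℓ_t‖₂² ≤ d ℓ̄_t ℓ̄_{t₁,t₂}`, the second term is at most `d ℓ̄_{t₁,t₂} / (2 C √T)`.
The weights `α_t` are nondecreasing and `0 ≤ D_t ≤ 2L` on the capped unit box, so by Abel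
summation the first terms add up to at most `α_{t₂} L`.
-/

open Finset Matrix

/-- The ℓ₁ norm on `ℝ^d`. -/
noncomputable def l1 {d : ℕ} (x : Fin d → ℝ) : ℝ := ∑ i, |x i|

/-- The ℓ∞ norm on `ℝ^d`. -/
noncomputable def linf {d : ℕ} (x : Fin d → ℝ) : ℝ := ⨆ i, |x i|

/-- Dot product on `ℝ^d`. -/
noncomputable def dotp {d : ℕ} (x y : Fin d → ℝ) : ℝ := ∑ i, x i * y i

/-- Squared Euclidean distance on `ℝ^d`. -/
noncomputable def sqdist {d : ℕ} (x y : Fin d → ℝ) : ℝ := ∑ i, (x i - y i) ^ 2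

/-- `z` is the Euclidean (metric) projection of `p` onto `K`. -/
def IsEuclidProj {d : ℕ} (K : Set (Fin d → ℝ)) (p z : Fin d → ℝ) : Prop :=
  z ∈ K ∧ ∀ y ∈ K, sqdist z p ≤ sqdist y p

/-- `intervalMax ℓ a b = max_{a ≤ t ≤ b} ‖ℓ_t‖_∞` (as the supremum of a finite nonempty set
of reals, for `a ≤ b`). -/
noncomputable def intervalMax {d : ℕ} (ℓ : ℕ → Fin d → ℝ) (a b : ℕ) : ℝ :=
  sSup ((fun t => linf (ℓ t)) '' Set.Icc a b)

theorem Convex.norm_sub_le_of_isMinOn {F : Type*} [NormedAddCommGroup F]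
    [InnerProductSpace ℝ F] {K : Set F} (hK : Convex ℝ K) {p z q : F} (hz : z ∈ K)
    (hmin : IsMinOn (fun y => ‖p - y‖) K z) (hq : q ∈ K) : ‖z - q‖ ≤ ‖p - q‖ := by
  have : Nonempty K := ⟨⟨z, hz⟩⟩
  have hinf : ‖p - z‖ = ⨅ w : K, ‖p - w‖ :=
    le_antisymm (le_ciInf fun w => isMinOn_iff.1 hmin w w.2)
      (ciInf_le ⟨0, fun _ ⟨_, h⟩ => h ▸ norm_nonneg _⟩ (⟨z, hz⟩ : K))
  have hobtuse := (norm_eq_iInf_iff_real_inner_le_zero hK hz).1 hinf q hq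
  have hsplit : ‖p - q‖ ^ 2 = ‖p - z‖ ^ 2 - 2 * inner ℝ (p - z) (q - z) + ‖z - q‖ ^ 2 := by
    rw [← sub_add_sub_cancel p z q, norm_add_sq_real, ← neg_sub q z, inner_neg_right]
    ring
  exact sq_le_sq₀ (norm_nonneg _) (norm_nonneg _) |>.1 <| by
    linarith [sq_nonneg ‖p - z‖]

lemma sqdist_eq_norm_sq {d : ℕ} (x y : Fin d → ℝ) :
    sqdist x y = ‖(WithLp.toLp 2 x : EuclideanSpace ℝ (Fin d)) - WithLp.toLp 2 y‖ ^ 2 := by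
  simp [EuclideanSpace.real_norm_sq_eq, sqdist]

lemma sqdist_nonneg {d : ℕ} (x y : Fin d → ℝ) : 0 ≤ sqdist x y := by
  rw [sqdist_eq_norm_sq]
  positivity

lemma IsEuclidProj.sqdist_le {d : ℕ} {K : Set (Fin d → ℝ)} (hK : Convex ℝ K)
    {p z q : Fin d → ℝ} (hz : IsEuclidProj K p z) (hq : q ∈ K) :
    sqdist z q ≤ sqdist p q := by
  let e : (Fin d → ℝ) →ₗ[ℝ] EuclideanSpace ℝ (Fin d) :=
    (WithLp.linearEquiv 2 ℝ (Fin d → ℝ)).symm.toLinearMap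
  have hmin : IsMinOn (fun y => ‖e p - y‖) (e '' K) (e z) := by
    rintro _ ⟨y, hy, rfl⟩
    have := hz.2 y hy
    rw [sqdist_eq_norm_sq, sqdist_eq_norm_sq] at this
    change ‖e p - e z‖ ≤ ‖e p - e y‖
    rw [norm_sub_rev, norm_sub_rev (e p)]
    exact (sq_le_sq₀ (norm_nonneg _) (norm_nonneg _)).1 this
  rw [sqdist_eq_norm_sq, sqdist_eq_norm_sq]
  gcongr
  exact (hK.linear_image e).norm_sub_le_of_isMinOn ⟨z, hz.1, rfl⟩ hmin ⟨q, hq, rfl⟩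

lemma sqdist_sub_mul {d : ℕ} (x q v : Fin d → ℝ) (η : ℝ) :
    sqdist (fun j => x j - η * v j) q =
      sqdist x q - 2 * η * dotp v (fun j => x j - q j) + η ^ 2 * ∑ j, v j ^ 2 := by
  simp only [sqdist, dotp, mul_sum, ← sum_sub_distrib, ← sum_add_distrib]
  exact sum_congr rfl fun j _ => by ring

lemma IsEuclidProj.dotp_le {d : ℕ} {K : Set (Fin d → ℝ)} (hK : Convex ℝ K)
    {x v z q : Fin d → ℝ} {α : ℝ} (hα : 0 < α)
    (hz : IsEuclidProj K (fun j => x j - 1 / α * v j) z) (hq : q ∈ K) :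
    dotp v (fun j => x j - q j) ≤
      α / 2 * (sqdist x q - sqdist z q) + (∑ j, v j ^ 2) / (2 * α) := by
  have h := mul_le_mul_of_nonneg_left (hz.sqdist_le hK hq) hα.le
  rw [sqdist_sub_mul] at h
  have hexpand : α * (sqdist x q - 2 * (1 / α) * dotp v (fun j => x j - q j) +
      (1 / α) ^ 2 * ∑ j, v j ^ 2) =
      α * sqdist x q - 2 * dotp v (fun j => x j - q j) + (∑ j, v j ^ 2) / α := by
    field_simp
  have hsplit : (∑ j, v j ^ 2) / (2 * α) = (∑ j, v j ^ 2) / α / 2 := by ring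
  linarith

lemma sum_sq_le_card_mul_mul {d : ℕ} {x : Fin d → ℝ} {a b : ℝ}
    (ha : ∀ j, |x j| ≤ a) (hb : ∀ j, |x j| ≤ b) : ∑ j, x j ^ 2 ≤ d * (a * b) := by
  calc ∑ j, x j ^ 2 = ∑ j, |x j| * |x j| := by simp only [← sq, sq_abs]
    _ ≤ ∑ _j : Fin d, a * b := sum_le_sum fun j _ =>
        mul_le_mul (ha j) (hb j) (abs_nonneg _) ((abs_nonneg _).trans (ha j))
    _ = d * (a * b) := by simp

lemma IsEuclidProj.dotp_le_of_abs_le {d : ℕ} {K : Set (Fin d → ℝ)} (hK : Convex ℝ K)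
    {x v z q : Fin d → ℝ} {G M c : ℝ} (hG : 0 < G) (hc : 0 < c)
    (hvG : ∀ j, |v j| ≤ G) (hvM : ∀ j, |v j| ≤ M)
    (hz : IsEuclidProj K (fun j => x j - 1 / (G * c) * v j) z) (hq : q ∈ K) :
    dotp v (fun j => x j - q j) ≤
      G * c / 2 * (sqdist x q - sqdist z q) + d * M / (2 * c) :=
  calc _ ≤ _ := hz.dotp_le hK (mul_pos hG hc) hq
    _ ≤ G * c / 2 * (sqdist x q - sqdist z q) + d * (G * M) / (2 * (G * c)) := by
      gcongr
      exact sum_sq_le_card_mul_mul hvG hvM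
    _ = _ := by field_simp

lemma sqdist_le_two_mul {d : ℕ} {x y : Fin d → ℝ} {L : ℝ}
    (hx : (∀ j, 0 ≤ x j ∧ x j ≤ 1) ∧ ∑ j, x j ≤ L)
    (hy : (∀ j, 0 ≤ y j ∧ y j ≤ 1) ∧ ∑ j, y j ≤ L) :
    sqdist x y ≤ 2 * L := by
  have hcoord (j : Fin d) : (x j - y j) ^ 2 ≤ x j + y j := by
    obtain ⟨hx0, hx1⟩ := hx.1 j
    obtain ⟨hy0, hy1⟩ := hy.1 j
    nlinarith
  calc sqdist x y ≤ ∑ j, (x j + y j) := sum_le_sum fun j _ => hcoord j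
    _ = ∑ j, x j + ∑ j, y j := sum_add_distrib
    _ ≤ 2 * L := by linarith [hx.2, hy.2]

lemma abs_le_linf {d : ℕ} (x : Fin d → ℝ) (j : Fin d) : |x j| ≤ linf x :=
  le_ciSup (f := fun i => |x i|) (Set.finite_range _).bddAbove j

lemma linf_nonneg {d : ℕ} (x : Fin d → ℝ) : 0 ≤ linf x :=
  Real.iSup_nonneg fun _ => abs_nonneg _

section intervalMax

variable {d : ℕ} (ℓ : ℕ → Fin d → ℝ)

lemma linf_le_intervalMax {a b t : ℕ} (hat : a ≤ t) (htb : t ≤ b) :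
    linf (ℓ t) ≤ intervalMax ℓ a b :=
  le_csSup ((Set.finite_Icc a b).image _).bddAbove ⟨t, ⟨hat, htb⟩, rfl⟩

lemma abs_le_intervalMax {a b t : ℕ} (hat : a ≤ t) (htb : t ≤ b) (j : Fin d) :
    |ℓ t j| ≤ intervalMax ℓ a b :=
  (abs_le_linf _ j).trans (linf_le_intervalMax ℓ hat htb)

lemma intervalMax_nonneg (a b : ℕ) : 0 ≤ intervalMax ℓ a b :=
  Real.sSup_nonneg fun _ ⟨_, _, h⟩ => h ▸ linf_nonneg _

lemma intervalMax_mono_right (a : ℕ) : Monotone (intervalMax ℓ a) := fun _ _ hbc =>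
  Real.sSup_le (fun _ ⟨_, ht, h⟩ => h ▸ linf_le_intervalMax ℓ ht.1 (ht.2.trans hbc))
    (intervalMax_nonneg ℓ _ _)

end intervalMax

lemma sum_Icc_mul_sub_succ_le {a D : ℕ → ℝ} {B : ℝ} {m n : ℕ} (hmn : m ≤ n)
    (ha : 0 ≤ a m) (hmono : Monotone a) (hD : ∀ t ∈ Icc m n, D t ≤ B) :
    ∑ t ∈ Icc m n, a t * (D t - D (t + 1)) ≤ a n * B - a n * D (n + 1) := by
  induction n, hmn using Nat.le_induction with
  | base =>
    rw [Icc_self, sum_singleton]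
    nlinarith [hD m (left_mem_Icc.2 le_rfl)]
  | succ n hmn ih =>
    rw [sum_Icc_succ_top (by omega)]
    have hstep : (a (n + 1) - a n) * (D (n + 1) - B) ≤ 0 :=
      mul_nonpos_of_nonneg_of_nonpos (sub_nonneg.2 (hmono n.le_succ))
        (sub_nonpos.2 (hD _ (mem_Icc.2 ⟨by omega, le_rfl⟩)))
    have := ih fun t ht => hD t (Icc_subset_Icc_right n.le_succ ht)
    linarith

lemma sum_Icc_mul_sub_succ_le_mul {a D : ℕ → ℝ} {B : ℝ} {m n : ℕ} (hmn : m ≤ n)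
    (ha : 0 ≤ a m) (hmono : Monotone a) (hD : ∀ t ∈ Icc m n, D t ≤ B)
    (hD' : 0 ≤ D (n + 1)) :
    ∑ t ∈ Icc m n, a t * (D t - D (t + 1)) ≤ a n * B := by
  have := mul_nonneg (ha.trans (hmono hmn)) hD'
  linarith [sum_Icc_mul_sub_succ_le hmn ha hmono hD]

theorem stmt3_general {d : ℕ} (T : ℕ) (hT : 1 ≤ T) (L C : ℝ) (hC : 0 < C)
    (K : ℕ → Set (Fin d → ℝ))
    (hKcv : ∀ t ∈ Finset.Icc 1 (T + 1), Convex ℝ (K t))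
    (hKsub : ∀ t ∈ Finset.Icc 1 (T + 1),
      K t ⊆ {q : Fin d → ℝ | (∀ j, 0 ≤ q j ∧ q j ≤ 1) ∧ ∑ j, q j ≤ L})
    (ℓ : ℕ → Fin d → ℝ)
    (hpos : ∀ t ∈ Finset.Icc 1 T, 0 < intervalMax ℓ 1 t)
    (qh : ℕ → Fin d → ℝ)
    (hq1 : qh 1 ∈ K 1)
    (hupd : ∀ t ∈ Finset.Icc 1 T,
      IsEuclidProj (K (t + 1))
        (fun j => qh t j - (1 / (intervalMax ℓ 1 t * C * Real.sqrt T)) * ℓ t j)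
        (qh (t + 1)))
    (q : Fin d → ℝ) (hq : ∀ t ∈ Finset.Icc 1 (T + 1), q ∈ K t)
    (t₁ t₂ : ℕ) (h1 : 1 ≤ t₁) (h12 : t₁ ≤ t₂) (h2T : t₂ ≤ T) :
    ∑ t ∈ Finset.Icc t₁ t₂, dotp (ℓ t) (fun j => qh t j - q j) ≤
      L * intervalMax ℓ 1 t₂ * C * Real.sqrt T +
        (d / 2) * intervalMax ℓ t₁ t₂ * ((t₂ : ℝ) - t₁ + 1) / (C * Real.sqrt T) := by
  set c := C * √(T : ℝ)
  set M := intervalMax ℓ t₁ t₂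
  have hc : 0 < c := mul_pos hC (Real.sqrt_pos.2 (by exact_mod_cast hT))
  have hmem : ∀ t ∈ Icc 1 (T + 1), qh t ∈ K t := by
    rintro (_ | _ | s) ht
    · simp at ht
    · exact hq1
    · exact (hupd (s + 1) (by simp at ht ⊢; omega)).1
  have hstep (t : ℕ) (ht : t ∈ Icc t₁ t₂) : dotp (ℓ t) (fun j => qh t j - q j) ≤
      intervalMax ℓ 1 t * c / 2 * (sqdist (qh t) q - sqdist (qh (t + 1)) q) + d * M / (2 * c) := by
    obtain ⟨ht₁, ht₂⟩ := mem_Icc.1 ht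
    have hproj : IsEuclidProj (K (t + 1))
        (fun j => qh t j - 1 / (intervalMax ℓ 1 t * c) * ℓ t j) (qh (t + 1)) := by
      simpa only [c, mul_assoc] using hupd t (mem_Icc.2 ⟨by omega, by omega⟩)
    exact hproj.dotp_le_of_abs_le (hKcv _ (by simp; omega)) (hpos t (by simp; omega)) hc
      (abs_le_intervalMax ℓ (by omega) le_rfl) (abs_le_intervalMax ℓ ht₁ ht₂)
      (hq _ (by simp; omega))
  have hdiam (t : ℕ) (ht : t ∈ Icc t₁ t₂) : sqdist (qh t) q ≤ 2 * L := by
    have htK : t ∈ Icc 1 (T + 1) := by simp at ht ⊢; omega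
    exact sqdist_le_two_mul (hKsub t htK (hmem t htK)) (hKsub t htK (hq t htK))
  have htele := sum_Icc_mul_sub_succ_le_mul (a := fun t => intervalMax ℓ 1 t * c / 2) h12
    (by have := intervalMax_nonneg ℓ 1 t₁; positivity)
    (fun a b hab => by dsimp only; gcongr; exact intervalMax_mono_right ℓ 1 hab) hdiam
    (sqdist_nonneg (qh (t₂ + 1)) q)
  calc ∑ t ∈ Icc t₁ t₂, dotp (ℓ t) (fun j => qh t j - q j)
      ≤ ∑ t ∈ Icc t₁ t₂, (intervalMax ℓ 1 t * c / 2 *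
          (sqdist (qh t) q - sqdist (qh (t + 1)) q) + d * M / (2 * c)) := sum_le_sum hstep
    _ = ∑ t ∈ Icc t₁ t₂, intervalMax ℓ 1 t * c / 2 *
          (sqdist (qh t) q - sqdist (qh (t + 1)) q) + (t₂ + 1 - t₁ : ℕ) * (d * M / (2 * c)) := by
      rw [sum_add_distrib, sum_const, Nat.card_Icc, nsmul_eq_mul]
    _ ≤ intervalMax ℓ 1 t₂ * c / 2 * (2 * L) + (t₂ + 1 - t₁ : ℕ) * (d * M / (2 * c)) :=
      add_le_add_left htele _
    _ = _ := by
      rw [Nat.cast_sub (by omega)]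
      push_cast
      ring

/-- Interval-regret bound for projected online gradient descent with adaptive learning
rate `η_t = 1/(ℓ̄_t C √T)`. -/
theorem stmt3 {d : ℕ} (T : ℕ) (hT : 1 ≤ T) (L C : ℝ) (hL : 0 < L) (hC : 0 < C)
    (K : ℕ → Set (Fin d → ℝ))
    (hKne : ∀ t ∈ Finset.Icc 1 (T + 1), (K t).Nonempty)
    (hKcl : ∀ t ∈ Finset.Icc 1 (T + 1), IsClosed (K t))
    (hKcv : ∀ t ∈ Finset.Icc 1 (T + 1), Convex ℝ (K t))
    (hKsub : ∀ t ∈ Finset.Icc 1 (T + 1),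
      K t ⊆ {q : Fin d → ℝ | (∀ j, 0 ≤ q j ∧ q j ≤ 1) ∧ ∑ j, q j ≤ L})
    (ℓ : ℕ → Fin d → ℝ)
    (hpos : ∀ t ∈ Finset.Icc 1 T, 0 < intervalMax ℓ 1 t)
    (qh : ℕ → Fin d → ℝ)
    (hq1 : qh 1 ∈ K 1)
    (hupd : ∀ t ∈ Finset.Icc 1 T,
      IsEuclidProj (K (t + 1))
        (fun j => qh t j - (1 / (intervalMax ℓ 1 t * C * Real.sqrt T)) * ℓ t j)
        (qh (t + 1)))
    (q : Fin d → ℝ) (hq : ∀ t ∈ Finset.Icc 1 (T + 1), q ∈ K t)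
    (t₁ t₂ : ℕ) (h1 : 1 ≤ t₁) (h12 : t₁ ≤ t₂) (h2T : t₂ ≤ T) :
    ∑ t ∈ Finset.Icc t₁ t₂, dotp (ℓ t) (fun j => qh t j - q j) ≤
      L * intervalMax ℓ 1 t₂ * C * Real.sqrt T +
        (d / 2) * intervalMax ℓ t₁ t₂ * ((t₂ : ℝ) - t₁ + 1) / (C * Real.sqrt T) :=
  stmt3_general T hT L C hC K hKcv hKsub ℓ hpos qh hq1 hupd q hq t₁ t₂ h1 h12 h2T
end

section
/- Fix d, m, T ∈ ℕ and reals Λ ≥ 0, E_q ≥ 0, E_G ≥ 0. For t ∈ {1,…,T} let r_t ∈ [0,1]^d, let G_t ∈ ℝ^{d×m} have all entries in [−1,1], let λ_t ∈ ℝ^m with λ_t ≥ 0 componentwise and ‖λ_t‖₁ ≤ Λ, and let q_t, q̂_t ∈ ℝ^d with Σ_{t=1}^T ‖q_t − q̂_t‖₁ ≤ E_q. Let Ḡ ∈ ℝ^{d×m} and q* ∈ ℝ^d satisfy (Ḡᵀq*)_i ≤ 0 for all i, and suppose | Σ_{t=1}^T λ_tᵀ (G_t − Ḡ)ᵀ q*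 | ≤ Λ·E_G. Define ℓ_t := G_t λ_t − r_t, R^P := Σ_{t=1}^T ℓ_tᵀ(q_t − q*), and R^D := −Σ_{t=1}^T λ_tᵀ G_tᵀ q̂_t. Then Σ_{t=1}^T r_tᵀ q_t ≥ Σ_{t=1}^T r_tᵀ q* − Λ·E_G − Λ·E_q − R^D − R^P. -/
open Finset Matrix

/-! The primal regret against `q*` splits into a constraint part and a reward part. The constraint
part at `q*` is at most `Λ E_G`, because it differs from `∑ λₜᵀ Ḡᵀ q* ≤ 0` by the Azuma term; the
constraint part at `qₜ` differs from the dual player's `∑ λₜᵀ Gₜᵀ q̂ₜ` by at most `Λ E_q`, since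
`|λᵀ Gᵀ v| ≤ ‖λ‖₁ ‖v‖₁` for a matrix with entries in `[-1, 1]`. Adding the two bounds to the
decomposition of `R^P` leaves the claimed inequality. -/

lemma dotp_eq_dotProduct {d : ℕ} (x y : Fin d → ℝ) : dotp x y = x ⬝ᵥ y := rfl

lemma dotp_transpose_mulVec {d m : ℕ} (M : Matrix (Fin d) (Fin m) ℝ) (x : Fin m → ℝ)
    (v : Fin d → ℝ) : dotp x (Mᵀ *ᵥ v) = dotp (M *ᵥ x) v := by
  rw [dotp_eq_dotProduct, dotp_eq_dotProduct, mulVec_transpose, dotProduct_comm,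
    ← dotProduct_mulVec, dotProduct_comm]

lemma abs_dotp_le_l1_mul {d : ℕ} {x y : Fin d → ℝ} {c : ℝ} (hy : ∀ i, |y i| ≤ c) :
    |dotp x y| ≤ l1 x * c :=
  calc |dotp x y| ≤ ∑ i, |x i| * |y i| := by
        simpa only [dotp, abs_mul] using Finset.abs_sum_le_sum_abs (fun i => x i * y i) Finset.univ
    _ ≤ ∑ i, |x i| * c := by gcongr; exact hy _
    _ = l1 x * c := by rw [l1, Finset.sum_mul]

lemma abs_transpose_mulVec_apply_le {d m : ℕ} {M : Matrix (Fin d) (Fin m) ℝ} {c : ℝ}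
    (hM : ∀ j i, |M j i| ≤ c) (v : Fin d → ℝ) (i : Fin m) : |(Mᵀ *ᵥ v) i| ≤ c * l1 v := by
  have hv := abs_dotp_le_l1_mul (x := v) (y := fun j => M j i) (fun j => hM j i)
  rw [mul_comm]
  convert hv using 2
  simp only [mulVec, dotProduct, transpose_apply, dotp, mul_comm]

lemma abs_dotp_transpose_mulVec_le {d m : ℕ} {M : Matrix (Fin d) (Fin m) ℝ} {c : ℝ}
    (hM : ∀ j i, |M j i| ≤ c) (x : Fin m → ℝ) (v : Fin d → ℝ) :
    |dotp x (Mᵀ *ᵥ v)| ≤ l1 x * (c * l1 v) :=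
  abs_dotp_le_l1_mul (abs_transpose_mulVec_apply_le hM v)

lemma l1_nonneg {d : ℕ} (x : Fin d → ℝ) : 0 ≤ l1 x :=
  Finset.sum_nonneg fun i _ => abs_nonneg (x i)

section Regret

variable {d m : ℕ} (S : Finset ℕ) (G : ℕ → Matrix (Fin d) (Fin m) ℝ) (lam : ℕ → Fin m → ℝ)

lemma dotp_loss_sub (M : Matrix (Fin d) (Fin m) ℝ) (x : Fin m → ℝ) (r q q' : Fin d → ℝ) :
    dotp (fun j => (M *ᵥ x) j - r j) (fun j => q j - q' j) =
      dotp x (Mᵀ *ᵥ q) - dotp x (Mᵀ *ᵥ q') - (dotp r q - dotp r q') := by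
  rw [dotp_transpose_mulVec, dotp_transpose_mulVec]
  simp only [dotp, sub_mul, mul_sub, Finset.sum_sub_distrib]
  ring

lemma sum_dotp_loss_sub (r q : ℕ → Fin d → ℝ) (q' : Fin d → ℝ) :
    ∑ t ∈ S, dotp (fun j => (G t *ᵥ lam t) j - r t j) (fun j => q t j - q' j) =
      ∑ t ∈ S, dotp (lam t) ((G t)ᵀ *ᵥ q t) - ∑ t ∈ S, dotp (lam t) ((G t)ᵀ *ᵥ q') -
        (∑ t ∈ S, dotp (r t) (q t) - ∑ t ∈ S, dotp (r t) q') := by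
  simp only [dotp_loss_sub, Finset.sum_sub_distrib]

lemma sum_dotp_transpose_mulVec_le_of_feasible {Gbar : Matrix (Fin d) (Fin m) ℝ}
    {q : Fin d → ℝ} (hlam : ∀ t ∈ S, ∀ i, 0 ≤ lam t i) (hfeas : ∀ i, (Gbarᵀ *ᵥ q) i ≤ 0) :
    ∑ t ∈ S, dotp (lam t) ((G t)ᵀ *ᵥ q) ≤ ∑ t ∈ S, dotp (lam t) ((G t - Gbar)ᵀ *ᵥ q) := by
  refine Finset.sum_le_sum fun t ht => ?_
  have hbar : lam t ⬝ᵥ (Gbarᵀ *ᵥ q) ≤ 0 :=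
    Finset.sum_nonpos fun i _ => mul_nonpos_of_nonneg_of_nonpos (hlam t ht i) (hfeas i)
  rw [transpose_sub, sub_mulVec, dotp_eq_dotProduct, dotp_eq_dotProduct, dotProduct_sub]
  linarith

lemma sum_dotp_transpose_mulVec_sub_le {Λ : ℝ} (hG : ∀ t ∈ S, ∀ j i, |G t j i| ≤ 1)
    (hlam : ∀ t ∈ S, l1 (lam t) ≤ Λ) (q q' : ℕ → Fin d → ℝ) :
    ∑ t ∈ S, dotp (lam t) ((G t)ᵀ *ᵥ q' t) - ∑ t ∈ S, dotp (lam t) ((G t)ᵀ *ᵥ q t) ≤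
      Λ * ∑ t ∈ S, l1 (fun j => q t j - q' t j) := by
  rw [← Finset.sum_sub_distrib, Finset.mul_sum]
  refine Finset.sum_le_sum fun t ht => ?_
  have hbound : |dotp (lam t) ((G t)ᵀ *ᵥ (q t - q' t))| ≤ l1 (lam t) * l1 (q t - q' t) := by
    simpa only [one_mul] using abs_dotp_transpose_mulVec_le (hG t ht) (lam t) (q t - q' t)
  have hsplit : dotp (lam t) ((G t)ᵀ *ᵥ (q t - q' t)) =
      dotp (lam t) ((G t)ᵀ *ᵥ q t) - dotp (lam t) ((G t)ᵀ *ᵥ q' t) := by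
    rw [mulVec_sub]
    exact dotProduct_sub _ _ _
  calc dotp (lam t) ((G t)ᵀ *ᵥ q' t) - dotp (lam t) ((G t)ᵀ *ᵥ q t)
      ≤ l1 (lam t) * l1 (q t - q' t) := by
        linarith [neg_abs_le (dotp (lam t) ((G t)ᵀ *ᵥ (q t - q' t)))]
    _ ≤ Λ * l1 (fun j => q t j - q' t j) := mul_le_mul_of_nonneg_right (hlam t ht) (l1_nonneg _)

end Regret

theorem stmt15_general {d m : ℕ} (T : ℕ) (Λ Eq EG : ℝ) (hΛ : 0 ≤ Λ)
    (r : ℕ → Fin d → ℝ)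
    (G : ℕ → Matrix (Fin d) (Fin m) ℝ)
    (hG : ∀ t ∈ Finset.Icc 1 T, ∀ j i, |G t j i| ≤ 1)
    (lam : ℕ → Fin m → ℝ)
    (hlnn : ∀ t ∈ Finset.Icc 1 T, ∀ i, 0 ≤ lam t i)
    (hl1 : ∀ t ∈ Finset.Icc 1 T, l1 (lam t) ≤ Λ)
    (qtrue qh : ℕ → Fin d → ℝ)
    (hdiff : ∑ t ∈ Finset.Icc 1 T, l1 (fun j => qtrue t j - qh t j) ≤ Eq)
    (Gbar : Matrix (Fin d) (Fin m) ℝ) (qstar : Fin d → ℝ)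
    (hfeas : ∀ i, (Gbarᵀ *ᵥ qstar) i ≤ 0)
    (hAz : |∑ t ∈ Finset.Icc 1 T, dotp (lam t) ((G t - Gbar)ᵀ *ᵥ qstar)| ≤ Λ * EG)
    (RP RD : ℝ)
    (hRP : RP = ∑ t ∈ Finset.Icc 1 T,
      dotp (fun j => (G t *ᵥ lam t) j - r t j) (fun j => qtrue t j - qstar j))
    (hRD : RD = -∑ t ∈ Finset.Icc 1 T, dotp (lam t) ((G t)ᵀ *ᵥ qh t)) :
    ∑ t ∈ Finset.Icc 1 T, dotp (r t) qstar - Λ * EG - Λ * Eq - RD - RP ≤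
      ∑ t ∈ Finset.Icc 1 T, dotp (r t) (qtrue t) := by
  rw [hRP, hRD, sum_dotp_loss_sub]
  have hopt := sum_dotp_transpose_mulVec_le_of_feasible _ G lam hlnn hfeas
  have hest := sum_dotp_transpose_mulVec_sub_le _ G lam hG hl1 qtrue qh
  have hscaled := mul_le_mul_of_nonneg_left hdiff hΛ
  linarith [le_abs_self (∑ t ∈ Finset.Icc 1 T, dotp (lam t) ((G t - Gbar)ᵀ *ᵥ qstar))]

/-- Deterministic reward lower bound for the stochastic-constraint analysis of PDGD-OPS. -/
theorem stmt15 {d m : ℕ} (T : ℕ) (Λ Eq EG : ℝ) (hΛ : 0 ≤ Λ) (hEq : 0 ≤ Eq) (hEG : 0 ≤ EG)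
    (r : ℕ → Fin d → ℝ) (hr : ∀ t ∈ Finset.Icc 1 T, ∀ j, r t j ∈ Set.Icc (0 : ℝ) 1)
    (G : ℕ → Matrix (Fin d) (Fin m) ℝ)
    (hG : ∀ t ∈ Finset.Icc 1 T, ∀ j i, |G t j i| ≤ 1)
    (lam : ℕ → Fin m → ℝ)
    (hlnn : ∀ t ∈ Finset.Icc 1 T, ∀ i, 0 ≤ lam t i)
    (hl1 : ∀ t ∈ Finset.Icc 1 T, l1 (lam t) ≤ Λ)
    (qtrue qh : ℕ → Fin d → ℝ)
    (hdiff : ∑ t ∈ Finset.Icc 1 T, l1 (fun j => qtrue t j - qh t j) ≤ Eq)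
    (Gbar : Matrix (Fin d) (Fin m) ℝ) (qstar : Fin d → ℝ)
    (hfeas : ∀ i, (Gbarᵀ *ᵥ qstar) i ≤ 0)
    (hAz : |∑ t ∈ Finset.Icc 1 T, dotp (lam t) ((G t - Gbar)ᵀ *ᵥ qstar)| ≤ Λ * EG)
    (RP RD : ℝ)
    (hRP : RP = ∑ t ∈ Finset.Icc 1 T,
      dotp (fun j => (G t *ᵥ lam t) j - r t j) (fun j => qtrue t j - qstar j))
    (hRD : RD = -∑ t ∈ Finset.Icc 1 T, dotp (lam t) ((G t)ᵀ *ᵥ qh t)) :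
    ∑ t ∈ Finset.Icc 1 T, dotp (r t) qstar - Λ * EG - Λ * Eq - RD - RP ≤
      ∑ t ∈ Finset.Icc 1 T, dotp (r t) (qtrue t) :=
  stmt15_general T Λ Eq EG hΛ r G hG lam hlnn hl1 qtrue qh hdiff Gbar qstar hfeas hAz RP RD hRP hRD
end
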